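/- arXiv:1410.1495 — 2 statements merged into one kernel-verified Lean document; each statement's English description precedes it below -/
import Mathlib

section
/- In the graded affine Hecke algebra H, for every w ∈ W and v ∈ V one has t_w · ṽ = (w(v))~ · t_w, where for v ∈ V the element ṽ is defined as ṽ = v − (1/2) Σ_{α ∈ R⁺} k_α ⟨v, α∨⟩ t_{s_α}. -/
noncomputable section

/-- A graded affine Hecke algebra `H` attached to a root datum `(R, V, R∨, V∨, Π)` and a
`W`-invariant parameter function `k`, in the sense of Lusztig.  Positive roots are indexed
by the finite type `ι`; `root i ∈ V` is the root, `coroot i ∈ V∨` the corresponding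
coroot, `refl i ∈ W` the associated reflection, and `simple ⊆ ι` the set of simple roots.
The algebra `H` contains `ℂ[W]` (via the multiplicative map `t`) and `S(V)` (via the
linear embedding `emb`, with commuting images), satisfies the Lusztig cross relation for
simple reflections, and has the Poincaré–Birkhoff–Witt property `ℂ[W] ⊗ S(V) ≅ H`. -/
structure GradedHecke (ι V W H : Type) [Fintype ι] [AddCommGroup V] [Module ℂ V]
    [Group W] [Ring H] [Algebra ℂ H] where
  /-- the reflection representation of `W` on `V` -/
  ρ : W →* (V ≃ₗ[ℂ] V)
  /-- the positive roots -/
  root : ι → V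
  /-- the positive coroots -/
  coroot : ι → (V →ₗ[ℂ] ℂ)
  /-- the reflection associated to each positive root -/
  refl : ι → W
  /-- the parameter function -/
  k : ι → ℂ
  /-- the set of simple roots -/
  simple : Set ι
  /-- the group-algebra part `t : w ↦ t_w` of `H` -/
  t : W →* H
  /-- the polynomial part `v ↦ f_v` of `H` -/
  emb : V →ₗ[ℂ] H
  root_injective : Function.Injective root
  t_injective : Function.Injective t
  emb_injective : Function.Injective emb
  emb_mul_comm : ∀ v v' : V, emb v * emb v' = emb v' * emb v
  refl_mul_self : ∀ i, refl i * refl i = 1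
  refl_apply : ∀ i (v : V), ρ (refl i) v = v - coroot i v • root i
  coroot_root_two : ∀ i, coroot i (root i) = 2
  k_invariant : ∀ i j, (∃ w : W, ρ w (root i) = root j) → k i = k j
  /-- the defining cross relation of the graded affine Hecke algebra -/
  cross_relation : ∀ i ∈ simple, ∀ v : V,
    t (refl i) * emb v - emb (ρ (refl i) v) * t (refl i) = algebraMap ℂ H (k i * coroot i v)
  /-- `W` is generated by the simple reflections -/
  generated_by_simple : Subgroup.closure (refl '' simple) = ⊤
  /-- a simple reflection permutes the positive roots other than itself -/
  simple_perm : ∀ i ∈ simple, ∀ j, j ≠ i → ∃ j', j' ≠ i ∧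
    root j' = ρ (refl i) (root j) ∧ (∀ v : V, coroot j' (ρ (refl i) v) = coroot j v) ∧
    refl j' = refl i * refl j * refl i ∧ k j' = k j
  /-- the Poincaré–Birkhoff–Witt property: `H = ⊕_w t_w · S(V)` -/
  pbw : ∀ h : H, ∃! c : W →₀ (Algebra.adjoin ℂ (Set.range emb)),
    h = c.sum fun w p => t w * (p : H)

variable {ι V W H : Type} [Fintype ι] [AddCommGroup V] [Module ℂ V]
    [Group W] [Ring H] [Algebra ℂ H]

/-- The element `ṽ = v − (1/2) Σ_{α ∈ R⁺} k_α ⟨v, α∨⟩ t_{s_α}` of the graded affine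
Hecke algebra. -/
def GradedHecke.tilde (G : GradedHecke ι V W H) (v : V) : H :=
  G.emb v - ∑ i : ι, ((2 : ℂ)⁻¹ * G.k i * G.coroot i v) • G.t (G.refl i)


/-- Auxiliary: the commutation relation for a simple reflection. -/
lemma GradedHecke.t_simple_mul_tilde (G : GradedHecke ι V W H) {i : ι}
    (hi : i ∈ G.simple) (v : V) :
    G.t (G.refl i) * G.tilde v = G.tilde (G.ρ (G.refl i) v) * G.t (G.refl i) := by
  classical
  choose σ hne hroot hcoroot hrefl hk using G.simple_perm i hi
  have hρs : ∀ x : V, G.ρ (G.refl i) (G.ρ (G.refl i) x) = x := by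
    intro x
    have : (G.ρ (G.refl i) * G.ρ (G.refl i)) x = x := by
      rw [← map_mul, G.refl_mul_self, map_one]; rfl
    simpa using this
  have hts : G.t (G.refl i) * G.t (G.refl i) = 1 := by
    rw [← map_mul, G.refl_mul_self, map_one]
  have hcomm : ∀ j (hj : j ≠ i), G.refl (σ j hj) * G.refl i = G.refl i * G.refl j := by
    intro j hj
    rw [hrefl j hj, mul_assoc, mul_assoc, G.refl_mul_self, mul_one]
  have hinv : ∀ j (hj : j ≠ i), σ (σ j hj) (hne j hj) = j := by
    intro j hj
    apply G.root_injective
    rw [hroot _ (hne j hj), hroot j hj, hρs]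
  have hcross : G.t (G.refl i) * G.emb v
      = G.emb (G.ρ (G.refl i) v) * G.t (G.refl i)
        + algebraMap ℂ H (G.k i * G.coroot i v) :=
    sub_eq_iff_eq_add'.mp (G.cross_relation i hi v)
  have h2 : G.coroot i (G.ρ (G.refl i) v) = - G.coroot i v := by
    rw [G.refl_apply]
    simp [G.coroot_root_two]
    ring
  have hErase :
      ∑ j ∈ Finset.univ.erase i,
          ((2:ℂ)⁻¹ * G.k j * G.coroot j v) • (G.t (G.refl i) * G.t (G.refl j))
      = ∑ j ∈ Finset.univ.erase i,
          ((2:ℂ)⁻¹ * G.k j * G.coroot j (G.ρ (G.refl i) v)) • (G.t (G.refl j) * G.t (G.refl i)) := by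
    refine Finset.sum_bij' (fun j hj => σ j (Finset.ne_of_mem_erase hj))
      (fun j hj => σ j (Finset.ne_of_mem_erase hj)) ?_ ?_ ?_ ?_ ?_
    · intro j hj
      exact Finset.mem_erase.mpr ⟨hne j _, Finset.mem_univ _⟩
    · intro j hj
      exact Finset.mem_erase.mpr ⟨hne j _, Finset.mem_univ _⟩
    · intro j hj; exact hinv j _
    · intro j hj; exact hinv j _
    · intro j hj
      have hj' := Finset.ne_of_mem_erase hj
      rw [hk j hj', hcoroot j hj', ← map_mul, ← map_mul, hcomm j hj']
  have hsum : ∑ j : ι, ((2:ℂ)⁻¹ * G.k j * G.coroot j v) • (G.t (G.refl i) * G.t (G.refl j))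
      = algebraMap ℂ H (G.k i * G.coroot i v)
        + ∑ j : ι, ((2:ℂ)⁻¹ * G.k j * G.coroot j (G.ρ (G.refl i) v)) • (G.t (G.refl j) * G.t (G.refl i)) := by
    rw [← Finset.sum_erase_add _ _ (Finset.mem_univ i),
        ← Finset.sum_erase_add Finset.univ (fun j => ((2:ℂ)⁻¹ * G.k j * G.coroot j (G.ρ (G.refl i) v)) • (G.t (G.refl j) * G.t (G.refl i))) (Finset.mem_univ i),
        hErase, hts, h2, Algebra.algebraMap_eq_smul_one]
    module
  unfold GradedHecke.tilde
  rw [mul_sub, sub_mul, Finset.mul_sum, Finset.sum_mul]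
  simp only [mul_smul_comm, smul_mul_assoc]
  rw [hcross, hsum]
  abel

/-- In the graded affine Hecke algebra, `t_w · ṽ = (w(v))~ · t_w` for all `w ∈ W` and
`v ∈ V`. -/
theorem GradedHecke.t_mul_tilde (G : GradedHecke ι V W H) (w : W) (v : V) :
    G.t w * G.tilde v = G.tilde (G.ρ w v) * G.t w := by
  have hw : w ∈ Subgroup.closure (G.refl '' G.simple) := by
    rw [G.generated_by_simple]; trivial
  refine Subgroup.closure_induction
    (p := fun g _ => ∀ v : V, G.t g * G.tilde v = G.tilde (G.ρ g v) * G.t g)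
    ?_ ?_ ?_ ?_ hw v
  · rintro x ⟨i, hi, rfl⟩ v
    exact G.t_simple_mul_tilde hi v
  · intro v
    simp
  · intro x y _ _ hx hy v
    have hρ : G.ρ (x * y) v = G.ρ x (G.ρ y v) := by rw [map_mul]; rfl
    calc G.t (x * y) * G.tilde v = G.t x * (G.t y * G.tilde v) := by rw [map_mul, mul_assoc]
      _ = G.t x * (G.tilde (G.ρ y v) * G.t y) := by rw [hy]
      _ = (G.t x * G.tilde (G.ρ y v)) * G.t y := by rw [mul_assoc]
      _ = (G.tilde (G.ρ x (G.ρ y v)) * G.t x) * G.t y := by rw [hx]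
      _ = G.tilde (G.ρ (x * y) v) * G.t (x * y) := by rw [hρ, map_mul, mul_assoc]
  · intro x _ hx v
    have h1 : G.t x⁻¹ * G.t x = 1 := by rw [← map_mul, inv_mul_cancel, map_one]
    have h2 : G.t x * G.t x⁻¹ = 1 := by rw [← map_mul, mul_inv_cancel, map_one]
    have hρ : G.ρ x (G.ρ x⁻¹ v) = v := by
      have h5 : (G.ρ x * G.ρ x⁻¹) v = v := by rw [← map_mul, mul_inv_cancel, map_one]; rfl
      exact h5
    have h := hx (G.ρ x⁻¹ v)
    rw [hρ] at h
    have h3 : G.t x⁻¹ * (G.t x * G.tilde (G.ρ x⁻¹ v)) * G.t x⁻¹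
        = G.tilde (G.ρ x⁻¹ v) * G.t x⁻¹ := by
      rw [← mul_assoc, h1, one_mul]
    have h4 : G.t x⁻¹ * (G.tilde v * G.t x) * G.t x⁻¹ = G.t x⁻¹ * G.tilde v := by
      rw [mul_assoc, mul_assoc, h2, mul_one]
    rw [← h4, ← h, h3]

end
end

section
/- Let X be a module over the graded affine Hecke algebra H, and define χ: X → H ⊗_{S(V)} Res_{S(V)} X by χ(x) = Σ_{w∈W} (−1)^{ℓ(w)} t_w ⊗ t_w⁻¹·x. Then for every simple reflection s ∈ W and x ∈ X, t_s · χ(x) = −χ(t_s · x). -/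
/-!
For a module `X` over the graded affine Hecke algebra `H`, the map
`χ : X → H ⊗_{S(V)} Res_{S(V)} X`, `χ(x) = Σ_{w ∈ W} (−1)^{ℓ(w)} t_w ⊗ t_w⁻¹·x`,
satisfies `t_s · χ(x) = −χ(t_s · x)` for every simple reflection `s ∈ W`.
(Here `(−1)^{ℓ(w)} = sgn(w)` where `sgn` is the sign character of `W`.)
-/

open scoped TensorProduct

noncomputable section

variable {ι V W H : Type} [Fintype ι] [AddCommGroup V] [Module ℂ V]
    [Group W] [Ring H] [Algebra ℂ H]

variable [Fintype W] (G : GradedHecke ι V W H)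
variable (X : Type) [AddCommGroup X] [Module ℂ X] [Module H X] [IsScalarTower ℂ H X]

/-- The `H`-submodule of relations defining the balanced tensor product
`H ⊗_{S(V)} Res_{S(V)} X`, where `S(V) ⊆ H` is the polynomial subalgebra generated by
the image of `V`. -/
def svRel : Submodule H (H ⊗[ℂ] X) :=
  Submodule.span H
    {z | ∃ (v : V) (x : X), z = (G.emb v) ⊗ₜ[ℂ] x - (1 : H) ⊗ₜ[ℂ] (G.emb v • x)}

/-- The induced module `H ⊗_{S(V)} Res_{S(V)} X`, with `H` acting by left multiplication
on the first factor. -/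
abbrev IndSV : Type := (H ⊗[ℂ] X) ⧸ svRel G X

/-- The map `χ(x) = Σ_{w ∈ W} (−1)^{ℓ(w)} t_w ⊗ t_w⁻¹·x`, where the sign character
`sgn` records `(−1)^{ℓ(w)}`. -/
def chi (sgn : W →* ℂ) (x : X) : IndSV G X :=
  ∑ w : W, sgn w • (svRel G X).mkQ (G.t w ⊗ₜ[ℂ] (G.t w⁻¹ • x))

/-- For every simple reflection `s` and every `x ∈ X`,
`t_s · χ(x) = −χ(t_s · x)`. -/
theorem t_simple_smul_chi (sgn : W →* ℂ)
    (hsgn : ∀ i ∈ G.simple, sgn (G.refl i) = -1)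
    (i : ι) (hi : i ∈ G.simple) (x : X) :
    G.t (G.refl i) • chi G X sgn x = -chi G X sgn (G.t (G.refl i) • x) := by
  classical
  set s := G.refl i with hs
  have hs2 : s * s = 1 := G.refl_mul_self i
  have hsinv : s⁻¹ = s := inv_eq_of_mul_eq_one_right hs2
  rw [chi, chi, Finset.smul_sum, ← Finset.sum_neg_distrib]
  refine Fintype.sum_equiv (Equiv.mulLeft s) _ _ (fun w => ?_)
  have h1 : (s * w)⁻¹ * s = w⁻¹ := by
    rw [mul_inv_rev, hsinv, mul_assoc, hs2, mul_one]
  have h2 : G.t (s * w)⁻¹ • (G.t s • x) = G.t w⁻¹ • x := by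
    rw [← mul_smul, ← map_mul, h1]
  have h3 : sgn (s * w) = -sgn w := by
    rw [map_mul, hsgn i hi, neg_one_mul]
  show _ = -(sgn (s * w) • (svRel G X).mkQ (G.t (s * w) ⊗ₜ[ℂ] (G.t (s * w)⁻¹ • (G.t s • x))))
  rw [h2, h3, neg_smul, neg_neg, smul_comm (G.t s) (sgn w),
    ← (svRel G X).mkQ.map_smul, TensorProduct.smul_tmul', smul_eq_mul, ← map_mul]

end
end
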